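/- Let 0<q<1, 0<α<2, β>0, and set α' := 2^α/((1−q^β)(1−q^{1/2})). Then for every integer k≥1 one has 1/Γ_q(αk+β) + 1/Γ_q(α(k−1)+β) ≤ (2^{1−α}/Γ_q(β)) · (1−q^{1/2})^{α(k−1)} · (α')^k / [k]_{q^{1/2}}!, where for 0<p<1 the p-factorial is [k]_p! := ∏_{j=1}^{k} (1−p^j)/(1−p). -/

import Mathlib

open scoped BigOperators

/-- The infinite q-Pochhammer symbol `(a;q)_∞ = ∏_{j=0}^∞ (1 - q^j a)`. -/
noncomputable def qPochInf (q a : ℝ) : ℝ := ∏' j : ℕ, (1 - q ^ j * a)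

/-- The q-gamma function `Γ_q(x) = ((q;q)_∞/(q^x;q)_∞)·(1-q)^{1-x}`. -/
noncomputable def qGamma (q x : ℝ) : ℝ :=
  (qPochInf q q / qPochInf q (q ^ x)) * (1 - q) ^ (1 - x)

/-- The p-factorial `[k]_p! = ∏_{j=1}^{k} (1−p^j)/(1−p)`, with `[0]_p! = 1`. -/
noncomputable def qFactorial (p : ℝ) (k : ℕ) : ℝ :=
  ∏ j ∈ Finset.range k, (1 - p ^ (j + 1)) / (1 - p)

/-!
Since `1/Γ_q(x) = (q^x;q)_∞ (1-q)^(x-1) / (q;q)_∞`, each term on the left is `1/Γ_q(β)` times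
`Γ_q(β)/Γ_q(t+β) = (q^(t+β);q)_∞ / (q^β;q)_∞ · (1-q)^t`, with `t = α(k-1)` or `t = αk`, so
`α(k-1) ≤ t ≤ 2k`; both ratios have the same bound, half of `Γ_q(β)` times the right-hand side. As `(a;q)_∞`
decreases in `a`, `(q^(t+β);q)_∞ ≤ (q^(2k+β);q)_∞ = (q^β;q)_∞ / ∏_{j<2k} (1 - q^(j+β))`.
The first `k` factors of this product are at least `1 - q^β` and the last `k` dominate
`1 - q^((j+1)/2)`, which gives the denominator `(1-q^β)^k (1-√q)^k [k]_{√q}!`. Finally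
`(1-q)^t ≤ (1-q)^(α(k-1)) ≤ (2(1-√q))^(α(k-1))` because `1 - q = (1-√q)(1+√q)`.
-/

open Real Finset

section QPochhammer

variable {q a b : ℝ}

lemma pow_mul_lt_one (hq0 : 0 ≤ q) (hq1 : q ≤ 1) (ha : a < 1) (j : ℕ) : q ^ j * a < 1 := by
  rcases le_or_gt a 0 with ha0 | ha0
  · exact (mul_nonpos_of_nonneg_of_nonpos (pow_nonneg hq0 j) ha0).trans_lt one_pos
  · exact (mul_le_of_le_one_left ha0.le (pow_le_one₀ hq0 hq1)).trans_lt ha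

lemma summable_log_one_sub_pow_mul (hq0 : 0 ≤ q) (hq1 : q < 1) (a : ℝ) :
    Summable fun j : ℕ ↦ log (1 - q ^ j * a) := by
  simpa only [sub_eq_add_neg] using
    Real.summable_log_one_add_of_summable ((summable_geometric_of_lt_one hq0 hq1).mul_right a).neg

lemma multipliable_one_sub_pow_mul (hq0 : 0 ≤ q) (hq1 : q < 1) (a : ℝ) :
    Multipliable fun j : ℕ ↦ 1 - q ^ j * a := by
  simpa only [sub_eq_add_neg] using
    Real.multipliable_one_add_of_summable ((summable_geometric_of_lt_one hq0 hq1).mul_right a).neg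

lemma qPochInf_eq_exp (hq0 : 0 ≤ q) (hq1 : q < 1) (ha : a < 1) :
    qPochInf q a = exp (∑' j : ℕ, log (1 - q ^ j * a)) :=
  (rexp_tsum_eq_tprod (fun j ↦ sub_pos.2 (pow_mul_lt_one hq0 hq1.le ha j))
    (summable_log_one_sub_pow_mul hq0 hq1 a)).symm

lemma qPochInf_pos (hq0 : 0 ≤ q) (hq1 : q < 1) (ha : a < 1) : 0 < qPochInf q a := by
  rw [qPochInf_eq_exp hq0 hq1 ha]
  exact exp_pos _

lemma qPochInf_le_qPochInf (hq0 : 0 ≤ q) (hq1 : q < 1) (hab : a ≤ b) (hb : b < 1) :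
    qPochInf q b ≤ qPochInf q a := by
  rw [qPochInf_eq_exp hq0 hq1 hb, qPochInf_eq_exp hq0 hq1 (hab.trans_lt hb), exp_le_exp]
  refine (summable_log_one_sub_pow_mul hq0 hq1 b).tsum_le_tsum (fun j ↦ ?_)
    (summable_log_one_sub_pow_mul hq0 hq1 a)
  refine log_le_log (sub_pos.2 (pow_mul_lt_one hq0 hq1.le hb j)) ?_
  have := mul_le_mul_of_nonneg_left hab (pow_nonneg hq0 j)
  linarith

lemma qPochInf_eq_prod_mul (hq0 : 0 ≤ q) (hq1 : q < 1) (a : ℝ) (n : ℕ) :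
    qPochInf q a = (∏ j ∈ range n, (1 - q ^ j * a)) * qPochInf q (q ^ n * a) := by
  have hshift : (fun j : ℕ ↦ 1 - q ^ (j + n) * a) = fun j ↦ 1 - q ^ j * (q ^ n * a) := by
    ext j; ring
  have hmul := Multipliable.prod_mul_tprod_nat_mul' (f := fun j ↦ 1 - q ^ j * a) (k := n)
    (hshift ▸ multipliable_one_sub_pow_mul hq0 hq1 _)
  unfold qPochInf
  rw [← hmul, hshift]

lemma qPochInf_rpow_pos {x : ℝ} (hq0 : 0 < q) (hq1 : q < 1) (hx : 0 < x) :
    0 < qPochInf q (q ^ x) :=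
  qPochInf_pos hq0.le hq1 (rpow_lt_one hq0.le hq1 hx)

end QPochhammer

lemma qGamma_pos {q x : ℝ} (hq0 : 0 < q) (hq1 : q < 1) (hx : 0 < x) : 0 < qGamma q x := by
  have := qPochInf_pos hq0.le hq1 hq1
  have := qPochInf_rpow_pos hq0 hq1 hx
  have : 0 < 1 - q := sub_pos.2 hq1
  unfold qGamma
  positivity

lemma qGamma_div_qGamma_add {q β t : ℝ} (hq0 : 0 < q) (hq1 : q < 1) (hβ : 0 < β)
    (ht : 0 ≤ t) :
    qGamma q β / qGamma q (t + β)
      = qPochInf q (q ^ (t + β)) / qPochInf q (q ^ β) * (1 - q) ^ t := by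
  have := (qPochInf_pos hq0.le hq1 hq1).ne'
  have := (qPochInf_rpow_pos hq0 hq1 hβ).ne'
  have := (qPochInf_rpow_pos hq0 hq1 (add_pos_of_nonneg_of_pos ht hβ)).ne'
  have h1q : 0 < 1 - q := sub_pos.2 hq1
  have hexp : (1 - q) ^ (1 - β) = (1 - q) ^ t * (1 - q) ^ (1 - (t + β)) := by
    rw [← rpow_add h1q]; ring_nf
  unfold qGamma
  rw [hexp]
  field_simp

lemma qFactorial_pos {p : ℝ} (hp0 : 0 ≤ p) (hp1 : p < 1) (k : ℕ) : 0 < qFactorial p k :=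
  prod_pos fun j _ ↦ div_pos (sub_pos.2 (pow_lt_one₀ hp0 hp1 (Nat.succ_ne_zero j)))
    (sub_pos.2 hp1)

lemma pow_mul_qFactorial {p : ℝ} (hp : p ≠ 1) (k : ℕ) :
    (1 - p) ^ k * qFactorial p k = ∏ j ∈ range k, (1 - p ^ (j + 1)) := by
  rw [qFactorial, prod_div_distrib, prod_const, card_range,
    mul_div_cancel₀ _ (pow_ne_zero _ (sub_ne_zero.2 hp.symm))]

lemma pow_mul_prod_le_prod_one_sub_sq_pow_mul {p b : ℝ} (hp0 : 0 ≤ p) (hp1 : p ≤ 1)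
    (hb0 : 0 ≤ b) (hb1 : b ≤ 1) (N : ℕ) :
    (1 - b) ^ N * ∏ j ∈ range N, (1 - p ^ (j + 1))
      ≤ ∏ j ∈ range (N + N), (1 - (p ^ 2) ^ j * b) := by
  have hpow : ∀ n : ℕ, 0 ≤ (p ^ 2) ^ n ∧ (p ^ 2) ^ n ≤ 1 := fun n ↦
    ⟨by positivity, pow_le_one₀ (by positivity) (pow_le_one₀ hp0 hp1)⟩
  rw [prod_range_add, ← card_range N, ← prod_const, card_range]
  refine mul_le_mul (prod_le_prod (fun _ _ ↦ sub_nonneg.2 hb1) fun j _ ↦ ?_)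
    (prod_le_prod (fun j _ ↦ sub_nonneg.2 (pow_le_one₀ hp0 hp1)) fun j hj ↦ ?_)
    (prod_nonneg fun j _ ↦ sub_nonneg.2 (pow_le_one₀ hp0 hp1))
    (prod_nonneg fun j _ ↦ by nlinarith [hpow j])
  · nlinarith [hpow j]
  · have hexp : (p ^ 2) ^ (N + j) ≤ p ^ (j + 1) := by
      rw [← pow_mul]
      exact pow_le_pow_of_le_one hp0 hp1 (by have := mem_range.1 hj; omega)
    nlinarith [hpow (N + j)]

lemma qGamma_div_qGamma_add_le {q p β s t : ℝ} {N : ℕ} (hq0 : 0 < q) (hq1 : q < 1)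
    (hp0 : 0 ≤ p) (hpq : p ^ 2 = q) (hβ : 0 < β) (hs : 0 ≤ s) (hst : s ≤ t)
    (htN : t ≤ 2 * N) :
    qGamma q β / qGamma q (t + β)
      ≤ (2 * (1 - p)) ^ s / ((1 - q ^ β) ^ N * ((1 - p) ^ N * qFactorial p N)) := by
  have hp1 : p < 1 := by nlinarith
  have h1q : 0 < 1 - q := sub_pos.2 hq1
  have hqβ0 : 0 < q ^ β := rpow_pos_of_pos hq0 β
  have hqβ1 : q ^ β < 1 := rpow_lt_one hq0.le hq1 hβ
  have hPβ : 0 < qPochInf q (q ^ β) := qPochInf_pos hq0.le hq1 hqβ1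
  set D := (1 - q ^ β) ^ N * ((1 - p) ^ N * qFactorial p N) with hD_def
  have hD : 0 < D := by
    have := qFactorial_pos hp0 hp1 N
    have : 0 < 1 - q ^ β := sub_pos.2 hqβ1
    have : 0 < 1 - p := sub_pos.2 hp1
    positivity
  have hpoch : qPochInf q (q ^ (t + β)) ≤ qPochInf q (q ^ β) / D := by
    have htail : q ^ (N + N) * q ^ β ≤ q ^ (t + β) := by
      rw [rpow_add hq0, ← rpow_natCast]
      exact mul_le_mul_of_nonneg_right
        (rpow_le_rpow_of_exponent_ge hq0 hq1.le (by push_cast; linarith)) hqβ0.le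
    have htail_lt : q ^ (N + N) * q ^ β < 1 :=
      htail.trans_lt (rpow_lt_one hq0.le hq1 (by linarith))
    have hhead : D ≤ ∏ j ∈ range (N + N), (1 - q ^ j * q ^ β) := by
      rw [hD_def, pow_mul_qFactorial hp1.ne]
      simpa only [hpq] using pow_mul_prod_le_prod_one_sub_sq_pow_mul hp0 hp1.le hqβ0.le hqβ1.le N
    rw [le_div_iff₀ hD, qPochInf_eq_prod_mul hq0.le hq1 (q ^ β) (N + N),
      mul_comm (∏ _ ∈ _, _)]
    exact mul_le_mul (qPochInf_le_qPochInf hq0.le hq1 htail (rpow_lt_one hq0.le hq1 (by linarith)))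
      hhead hD.le (qPochInf_pos hq0.le hq1 htail_lt).le
  have hpow : (1 - q) ^ t ≤ (2 * (1 - p)) ^ s :=
    calc (1 - q) ^ t ≤ (1 - q) ^ s := rpow_le_rpow_of_exponent_ge h1q (by linarith) hst
      _ ≤ (2 * (1 - p)) ^ s := rpow_le_rpow h1q.le (by nlinarith) hs
  rw [qGamma_div_qGamma_add hq0 hq1 hβ (hs.trans hst)]
  calc qPochInf q (q ^ (t + β)) / qPochInf q (q ^ β) * (1 - q) ^ t
      ≤ qPochInf q (q ^ β) / D / qPochInf q (q ^ β) * (2 * (1 - p)) ^ s := by gcongr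
    _ = (2 * (1 - p)) ^ s / D := by field_simp

lemma two_rpow_one_sub_div_mul_eq {α x c F G : ℝ} (hx : 0 < x) (hc : c ≠ 0) (hF : F ≠ 0)
    (hG : G ≠ 0) (n : ℕ) :
    2 ^ (1 - α) / G * x ^ (α * n) * (2 ^ α / (c * x)) ^ (n + 1) / F
      = 2 * ((2 * x) ^ (α * n) / (c ^ (n + 1) * (x ^ (n + 1) * F))) / G := by
  rw [mul_rpow zero_le_two hx.le, div_pow, mul_pow]
  field_simp
  rw [← rpow_natCast, ← rpow_mul zero_le_two, ← rpow_add zero_lt_two,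
    show 1 - α + α * ((n + 1 : ℕ) : ℝ) = 1 + α * n by push_cast; ring,
    rpow_add zero_lt_two, rpow_one]

theorem qGamma_sum_bound (q α β : ℝ) (hq0 : 0 < q) (hq1 : q < 1)
    (hα0 : 0 < α) (hα2 : α < 2) (hβ : 0 < β) :
    ∀ k : ℕ, 1 ≤ k →
      1 / qGamma q (α * k + β) + 1 / qGamma q (α * ((k : ℝ) - 1) + β)
        ≤ (2 ^ ((1 : ℝ) - α) / qGamma q β)
            * (1 - q ^ ((1 : ℝ) / 2)) ^ (α * ((k : ℝ) - 1))
            * (2 ^ α / ((1 - q ^ β) * (1 - q ^ ((1 : ℝ) / 2)))) ^ k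
            / qFactorial (q ^ ((1 : ℝ) / 2)) k := by
  intro k hk
  obtain ⟨n, rfl⟩ := Nat.exists_eq_add_of_le' hk
  rw [show ((n + 1 : ℕ) : ℝ) - 1 = n by push_cast; ring]
  set p := q ^ ((1 : ℝ) / 2)
  have hp0 : 0 ≤ p := rpow_nonneg hq0.le _
  have hp1 : p < 1 := rpow_lt_one hq0.le hq1 one_half_pos
  have hpq : p ^ 2 = q := by
    rw [← rpow_natCast, ← rpow_mul hq0.le]; norm_num
  set B := (2 * (1 - p)) ^ (α * n)
    / ((1 - q ^ β) ^ (n + 1) * ((1 - p) ^ (n + 1) * qFactorial p (n + 1)))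
  have hB₁ : qGamma q β / qGamma q (α * (n + 1 : ℕ) + β) ≤ B :=
    qGamma_div_qGamma_add_le hq0 hq1 hp0 hpq hβ (by positivity) (by push_cast; linarith)
      (by gcongr)
  have hB₀ : qGamma q β / qGamma q (α * n + β) ≤ B :=
    qGamma_div_qGamma_add_le hq0 hq1 hp0 hpq hβ (by positivity) le_rfl (by push_cast; nlinarith)
  have hΓβ := qGamma_pos hq0 hq1 hβ
  rw [two_rpow_one_sub_div_mul_eq (sub_pos.2 hp1) (sub_pos.2 (rpow_lt_one hq0.le hq1 hβ)).ne'
    (qFactorial_pos hp0 hp1 _).ne' hΓβ.ne']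
  calc 1 / qGamma q (α * (n + 1 : ℕ) + β) + 1 / qGamma q (α * n + β)
      = (qGamma q β / qGamma q (α * (n + 1 : ℕ) + β) + qGamma q β / qGamma q (α * n + β))
          / qGamma q β := by field_simp
    _ ≤ (B + B) / qGamma q β := by gcongr
    _ = 2 * B / qGamma q β := by ring
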